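/- arXiv:2202.00897 — 2 statements merged into one kernel-verified Lean document; each statement's English description precedes it below -/
import Mathlib

section
/- Let (S_ζ : ζ < ν) be a sequence of subsets of ω and let (A_ε : ε < θ) be a ⊊*-decreasing sequence of infinite subsets of ω, where θ is a regular uncountable cardinal. For each ε < θ suppose ζ_ε < ν is minimal such that S_{ζ_ε} splits A_{ε'} for all ε' < ε, and suppose S_{ζ_ε} does not split A_ε. Then the sequence (ζ_ε : ε < θ) is strictly increasing; in particular θ ≤ ν. -/
/-- S splits A: both A ∩ S and A \ S are infinite. -/
def Splits (S A : Set ℕ) : Prop := (A ∩ S).Infinite ∧ (A \ S).Infinite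

theorem StrictMonoOn.le_apply_of_lt {α : Type*} [LinearOrder α] [WellFoundedLT α]
    {f : α → α} {o : α} (hf : StrictMonoOn f (Set.Iio o)) {x : α} (hx : x < o) : x ≤ f x := by
  induction x using WellFoundedLT.induction with
  | _ x ih =>
    by_contra! hfx
    exact (ih (f x) hfx (hfx.trans hx)).not_gt (hf (hfx.trans hx) hx hfx)

section LeastSplitter

variable {ι κ : Type*} [LinearOrder ι] [LinearOrder κ] {S : κ → Set ℕ} {A : ι → Set ℕ}
  {ζ : ι → κ} {o : ι}

/- For `ε < ε'`, `S (ζ ε')` splits `A ε`, so `ζ ε' ≠ ζ ε`; it also splits every `A ε''` with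
`ε'' < ε`, so `ζ ε ≤ ζ ε'` by minimality. -/
theorem strictMonoOn_least_splitter
    (hsplits : ∀ ε < o, ∀ ε' < ε, Splits (S (ζ ε)) (A ε'))
    (hmin : ∀ ε < o, ∀ ζ' < ζ ε, ¬ ∀ ε' < ε, Splits (S ζ') (A ε'))
    (hnot : ∀ ε < o, ¬ Splits (S (ζ ε)) (A ε)) :
    StrictMonoOn ζ (Set.Iio o) := by
  intro ε hε ε' hε' hlt
  rcases lt_trichotomy (ζ ε) (ζ ε') with h | h | h
  · exact h
  · exact absurd (h ▸ hsplits ε' hε' ε hlt) (hnot ε hε)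
  · exact absurd (fun ε'' hε'' => hsplits ε' hε' ε'' (hε''.trans hlt)) (hmin ε hε (ζ ε') h)

end LeastSplitter

theorem stmt13_general (θ : Cardinal)
    (ν : Ordinal) (S : Ordinal → Set ℕ) (A : Ordinal → Set ℕ)
    (ζ : Ordinal → Ordinal)
    (hζν : ∀ ε < θ.ord, ζ ε < ν)
    (hsplits : ∀ ε < θ.ord, ∀ ε' < ε, Splits (S (ζ ε)) (A ε'))
    (hmin : ∀ ε < θ.ord, ∀ ζ' < ζ ε, ¬ ∀ ε' < ε, Splits (S ζ') (A ε'))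
    (hnot : ∀ ε < θ.ord, ¬ Splits (S (ζ ε)) (A ε)) :
    (∀ ε ε', ε < ε' → ε' < θ.ord → ζ ε < ζ ε') ∧ θ.ord ≤ ν := by
  have hmono := strictMonoOn_least_splitter hsplits hmin hnot
  refine ⟨fun ε ε' hlt hε' => hmono (hlt.trans hε') hε' hlt, ?_⟩
  by_contra! hν
  exact (hmono.le_apply_of_lt hν).not_gt (hζν ν hν)

/-- Given sets (S_ζ : ζ < ν) and a ⊊*-decreasing chain (A_ε : ε < θ) with θ
regular uncountable, if for each ε < θ, ζ_ε < ν is minimal such that S_{ζ_ε}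
splits A_{ε'} for all ε' < ε, and S_{ζ_ε} does not split A_ε, then
(ζ_ε : ε < θ) is strictly increasing; in particular θ ≤ ν. -/
theorem stmt13 (θ : Cardinal) (hreg : θ.IsRegular) (hunc : Cardinal.aleph0 < θ)
    (ν : Ordinal) (S : Ordinal → Set ℕ) (A : Ordinal → Set ℕ)
    (hAinf : ∀ ε < θ.ord, (A ε).Infinite)
    (hdec : ∀ ε ε', ε < ε' → ε' < θ.ord →
      (A ε' \ A ε).Finite ∧ (A ε \ A ε').Infinite)
    (ζ : Ordinal → Ordinal)
    (hζν : ∀ ε < θ.ord, ζ ε < ν)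
    (hsplits : ∀ ε < θ.ord, ∀ ε' < ε, Splits (S (ζ ε)) (A ε'))
    (hmin : ∀ ε < θ.ord, ∀ ζ' < ζ ε, ¬ ∀ ε' < ε, Splits (S ζ') (A ε'))
    (hnot : ∀ ε < θ.ord, ¬ Splits (S (ζ ε)) (A ε)) :
    (∀ ε ε', ε < ε' → ε' < θ.ord → ζ ε < ζ ε') ∧ θ.ord ≤ ν :=
  stmt13_general θ ν S A ζ hζν hsplits hmin hnot
end

section
/- Suppose {A_γ : γ < θ} is a family of mad families on ω indexed by a regular uncountable cardinal θ, such that ⋃_{γ<θ} A_γ is dense in P(ω)/fin (for every infinite B ⊆ ω there is γ and A ∈ A_γ with A ⊆* B) and A_δ refines A_γ for γ ≤ δ. If additionally for every γ < θ there exist δ > γ, A ∈ A_δ, and B ∈ A_γ with A ⊊* B, then there is no mad family refining all A_γ; i.e., {A_γ : γ < θ} is a base matrix. -/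
/-- 𝒜 is a mad family on ω. -/
def IsMadFamily (𝒜 : Set (Set ℕ)) : Prop :=
  (∀ A ∈ 𝒜, A.Infinite) ∧
  (∀ A ∈ 𝒜, ∀ B ∈ 𝒜, A ≠ B → (A ∩ B).Finite) ∧
  ∀ B : Set ℕ, B.Infinite → ∃ A ∈ 𝒜, (A ∩ B).Infinite

/-- 𝒜 refines ℬ: every A ∈ 𝒜 is ⊆* some B ∈ ℬ. -/
def Refines (𝒜 ℬ : Set (Set ℕ)) : Prop :=
  ∀ A ∈ 𝒜, ∃ B ∈ ℬ, (A \ B).Finite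

/-!
A common refinement contradicts density. Split any C of it into two infinite halves Y and
C \ Y, and by density take A ⊆* Y from some level γ. At that level C ⊆* B for some
B, so A ⊆* B, and almost disjointness forces A = B; hence C ⊆* Y, contradicting that C \ Y is
infinite.
-/

theorem Set.Infinite.exists_subset_infinite_sdiff_infinite {α : Type*} {s : Set α}
    (hs : s.Infinite) : ∃ t ⊆ s, t.Infinite ∧ (s \ t).Infinite := by
  set f : ℕ → α := fun n => hs.natEmbedding s n
  have hf : f.Injective := Subtype.val_injective.comp (hs.natEmbedding s).injective
  refine ⟨Set.range fun n => f (2 * n), Set.range_subset_iff.2 fun n => (hs.natEmbedding s _).2,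
    Set.infinite_range_of_injective fun m n h => by have := hf h; omega, ?_⟩
  refine (Set.infinite_range_of_injective fun m n h => by have := hf h; omega).mono
    (s := Set.range fun n => f (2 * n + 1)) ?_
  rintro _ ⟨n, rfl⟩
  exact ⟨(hs.natEmbedding s _).2, fun ⟨m, hm⟩ => by have := hf hm; omega⟩

theorem Set.Finite.sdiff_trans {α : Type*} {A B C : Set α} (hAB : (A \ B).Finite)
    (hBC : (B \ C).Finite) : (A \ C).Finite :=
  (hAB.union hBC).subset (sdiff_triangle A B C)

namespace IsMadFamily

variable {𝒜 : Set (Set ℕ)}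

theorem eq_of_finite_sdiff (h𝒜 : IsMadFamily 𝒜) {A B : Set ℕ} (hA : A ∈ 𝒜) (hB : B ∈ 𝒜)
    (hAB : (A \ B).Finite) : A = B := by
  by_contra hne
  exact ((h𝒜.1 A hA).inter_of_finite_sdiff hAB) (h𝒜.2.1 A hA B hB hne)

theorem nonempty (h𝒜 : IsMadFamily 𝒜) : 𝒜.Nonempty :=
  let ⟨A, hA, _⟩ := h𝒜.2.2 Set.univ Set.infinite_univ
  ⟨A, hA⟩

theorem finite_sdiff_of_subset (h𝒜 : IsMadFamily 𝒜) {A B C Y : Set ℕ} (hA : A ∈ 𝒜)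
    (hB : B ∈ 𝒜) (hCB : (C \ B).Finite) (hYC : Y ⊆ C) (hAY : (A \ Y).Finite) :
    (C \ Y).Finite := by
  have hAC : (A \ C).Finite := hAY.subset (Set.sdiff_subset_sdiff_right hYC)
  have hAB : A = B := h𝒜.eq_of_finite_sdiff hA hB (hAC.sdiff_trans hCB)
  exact (hAB ▸ hCB).sdiff_trans hAY

end IsMadFamily

theorem stmt15_general (θ : Cardinal)
    (𝔄 : Ordinal → Set (Set ℕ))
    (hmad : ∀ γ < θ.ord, IsMadFamily (𝔄 γ))
    (hdense : ∀ B : Set ℕ, B.Infinite →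
      ∃ γ < θ.ord, ∃ A ∈ 𝔄 γ, (A \ B).Finite) :
    ¬ ∃ 𝒞 : Set (Set ℕ), IsMadFamily 𝒞 ∧ ∀ γ < θ.ord, Refines 𝒞 (𝔄 γ) := by
  rintro ⟨𝒞, h𝒞, hrefines⟩
  obtain ⟨C, hC⟩ := h𝒞.nonempty
  obtain ⟨Y, hYC, hY, hCY⟩ := (h𝒞.1 C hC).exists_subset_infinite_sdiff_infinite
  obtain ⟨γ, hγ, A, hA, hAY⟩ := hdense Y hY
  obtain ⟨B, hB, hCB⟩ := hrefines γ hγ C hC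
  exact hCY ((hmad γ hγ).finite_sdiff_of_subset hA hB hCB hYC hAY)

/-- If (𝔄_γ : γ < θ) (θ regular uncountable) is a refining sequence of mad
families whose union is dense in P(ω)/fin, and for every γ there are δ > γ,
A ∈ 𝔄_δ and B ∈ 𝔄_γ with A ⊊* B, then there is no mad family refining all the
𝔄_γ; i.e. the family is a base matrix. -/
theorem stmt15 (θ : Cardinal) (hreg : θ.IsRegular) (hunc : Cardinal.aleph0 < θ)
    (𝔄 : Ordinal → Set (Set ℕ))
    (hmad : ∀ γ < θ.ord, IsMadFamily (𝔄 γ))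
    (hdense : ∀ B : Set ℕ, B.Infinite →
      ∃ γ < θ.ord, ∃ A ∈ 𝔄 γ, (A \ B).Finite)
    (href : ∀ γ δ, γ ≤ δ → δ < θ.ord → Refines (𝔄 δ) (𝔄 γ))
    (hproper : ∀ γ < θ.ord, ∃ δ, γ < δ ∧ δ < θ.ord ∧
      ∃ A ∈ 𝔄 δ, ∃ B ∈ 𝔄 γ, (A \ B).Finite ∧ (B \ A).Infinite) :
    ¬ ∃ 𝒞 : Set (Set ℕ), IsMadFamily 𝒞 ∧ ∀ γ < θ.ord, Refines 𝒞 (𝔄 γ) :=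
  stmt15_general θ 𝔄 hmad hdense
end
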